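/- There is no Helly-type theorem for contractible hulls of line arrangements in the plane: for every n ≥ 3 there exist families F_1, …, F_n, each consisting of four lines in R^2, such that for every index j the intersection ⋂_{i ≠ j} hull(F_i) is nonempty, but the full intersection ⋂_{i=1}^{n} hull(F_i) is empty. -/

import Mathlib

open scoped RealInnerProductSpace

/-- Membership in the contractible hull of a finite family of lines in the
plane, each line `k` given as `{x | ⟪a k, x⟫ = b k}` with `a k ≠ 0`: the
point `x` cannot escape to infinity in any direction without touching one of
the lines. -/
def inContractibleHull {m : ℕ} (a : Fin m → EuclideanSpace ℝ (Fin 2))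
    (b : Fin m → ℝ) (x : EuclideanSpace ℝ (Fin 2)) : Prop :=
  ∀ u : EuclideanSpace ℝ (Fin 2), ‖u‖ = 1 →
    ∃ (k : Fin m) (t : ℝ), 0 ≤ t ∧ ⟪a k, x + t • u⟫ = b k

namespace NoHellyAux

open Real

noncomputable def vec2 (a b : ℝ) : EuclideanSpace ℝ (Fin 2) :=
  (WithLp.equiv 2 (∀ _ : Fin 2, ℝ)).symm ![a, b]

@[simp] lemma vec2_apply_zero (a b : ℝ) : vec2 a b 0 = a := by simp [vec2]

@[simp] lemma vec2_apply_one (a b : ℝ) : vec2 a b 1 = b := by simp [vec2]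

lemma inner2 (v w : EuclideanSpace ℝ (Fin 2)) :
    ⟪v, w⟫ = v 0 * w 0 + v 1 * w 1 := by
  simp [PiLp.inner_apply, RCLike.inner_apply, Fin.sum_univ_two]; ring

lemma norm_sq2 (v : EuclideanSpace ℝ (Fin 2)) : v 0 ^ 2 + v 1 ^ 2 = ‖v‖ ^ 2 := by
  rw [← real_inner_self_eq_norm_sq, inner2]; ring

lemma coord_add_smul (z u : EuclideanSpace ℝ (Fin 2)) (t : ℝ) (i : Fin 2) :
    (z + t • u) i = z i + t * u i := by
  simp [PiLp.add_apply, PiLp.smul_apply]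

noncomputable def SS (n i : ℕ) : ℝ := Real.sin (π * i / n)
noncomputable def CC (n i : ℕ) : ℝ := Real.cos (π * i / n)
noncomputable def SG (n : ℕ) : ℝ := Real.sin (π / (2 * n)) / 70

lemma pySC (n i : ℕ) : SS n i ^ 2 + CC n i ^ 2 = 1 := sin_sq_add_cos_sq _

noncomputable def FV (n i : ℕ) : EuclideanSpace ℝ (Fin 2) := vec2 (-SS n i) (CC n i)
noncomputable def DV (n i : ℕ) : EuclideanSpace ℝ (Fin 2) := vec2 (CC n i) (SS n i)

noncomputable def AA (n i : ℕ) : Fin 4 → EuclideanSpace ℝ (Fin 2) :=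
  ![FV n i, FV n i,
    vec2 (-SS n i + SG n * CC n i) (CC n i + SG n * SS n i),
    vec2 (-SS n i - SG n * CC n i) (CC n i - SG n * SS n i)]

noncomputable def BB (n : ℕ) : Fin 4 → ℝ := ![1, -1, -(100 * SG n), 100 * SG n]

noncomputable def Qf (n i : ℕ) (z : EuclideanSpace ℝ (Fin 2)) : ℝ :=
  -SS n i * z 0 + CC n i * z 1

noncomputable def Wf (n i : ℕ) (z : EuclideanSpace ℝ (Fin 2)) : ℝ :=
  CC n i * z 0 + SS n i * z 1

lemma inner_AA0 (n i : ℕ) (w : EuclideanSpace ℝ (Fin 2)) :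
    ⟪AA n i 0, w⟫ = Qf n i w := by
  simp [AA, FV, inner2, Qf]

lemma inner_AA1 (n i : ℕ) (w : EuclideanSpace ℝ (Fin 2)) :
    ⟪AA n i 1, w⟫ = Qf n i w := by
  simp [AA, FV, inner2, Qf]

lemma inner_AA2 (n i : ℕ) (w : EuclideanSpace ℝ (Fin 2)) :
    ⟪AA n i 2, w⟫ = Qf n i w + SG n * Wf n i w := by
  simp [AA, inner2, Qf, Wf]; ring

lemma inner_AA3 (n i : ℕ) (w : EuclideanSpace ℝ (Fin 2)) :
    ⟪AA n i 3, w⟫ = Qf n i w - SG n * Wf n i w := by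
  simp [AA, inner2, Qf, Wf]; ring

lemma Qf_lin (n i : ℕ) (z u : EuclideanSpace ℝ (Fin 2)) (t : ℝ) :
    Qf n i (z + t • u) = Qf n i z + t * Qf n i u := by
  simp [Qf, coord_add_smul]; ring

lemma Wf_lin (n i : ℕ) (z u : EuclideanSpace ℝ (Fin 2)) (t : ℝ) :
    Wf n i (z + t • u) = Wf n i z + t * Wf n i u := by
  simp [Wf, coord_add_smul]; ring

lemma Qf_smul (n i : ℕ) (c : ℝ) (v : EuclideanSpace ℝ (Fin 2)) :
    Qf n i (c • v) = c * Qf n i v := by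
  simp [Qf, PiLp.smul_apply]; ring

lemma Wf_smul (n i : ℕ) (c : ℝ) (v : EuclideanSpace ℝ (Fin 2)) :
    Wf n i (c • v) = c * Wf n i v := by
  simp [Wf, PiLp.smul_apply]; ring

lemma Qf_DV_self (n i : ℕ) : Qf n i (DV n i) = 0 := by
  simp [Qf, DV]; ring

lemma Wf_DV_self (n i : ℕ) : Wf n i (DV n i) = 1 := by
  have := pySC n i
  simp [Wf, DV]; nlinarith [this]

lemma norm_DV (n i : ℕ) : ‖DV n i‖ = 1 := by
  have h : ‖DV n i‖ ^ 2 = 1 := by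
    rw [← norm_sq2]; simp [DV]; nlinarith [pySC n i]
  nlinarith [norm_nonneg (DV n i), h]

lemma pyQW (n i : ℕ) (z : EuclideanSpace ℝ (Fin 2)) :
    Qf n i z ^ 2 + Wf n i z ^ 2 = ‖z‖ ^ 2 := by
  have h : Qf n i z ^ 2 + Wf n i z ^ 2
      = (SS n i ^ 2 + CC n i ^ 2) * (z 0 ^ 2 + z 1 ^ 2) := by
    simp [Qf, Wf]; ring
  rw [h, pySC, one_mul, norm_sq2]

end NoHellyAux
namespace NoHellyAux

open Real

lemma norm_inv_smul {v : EuclideanSpace ℝ (Fin 2)} (hv : v ≠ 0) :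
    ‖(‖v‖⁻¹ : ℝ) • v‖ = 1 := by
  have h : (0:ℝ) < ‖v‖ := norm_pos_iff.mpr hv
  rw [norm_smul, norm_inv, norm_norm]
  field_simp

lemma mem_hull (n i : ℕ) (hsg : 0 < SG n) (z : EuclideanSpace ℝ (Fin 2))
    (h1 : |Qf n i z| ≤ 1) (h2 : SG n * |Wf n i z + 100| ≤ |Qf n i z|) :
    inContractibleHull (AA n i) (BB n) z := by
  intro u hu
  have huu : u 0 ^ 2 + u 1 ^ 2 = 1 := by rw [norm_sq2, hu]; norm_num
  set α := Qf n i u with hα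
  set β := Wf n i u with hβ
  have hab : α ^ 2 + β ^ 2 = 1 := by
    have h : α ^ 2 + β ^ 2 = (SS n i ^ 2 + CC n i ^ 2) * (u 0 ^ 2 + u 1 ^ 2) := by
      rw [hα, hβ]; simp [Qf, Wf]; ring
    rw [h, pySC, one_mul, huu]
  have habs1 : -1 ≤ Qf n i z ∧ Qf n i z ≤ 1 := abs_le.mp h1
  rcases lt_trichotomy α 0 with haneg | hazero | hapos
  · refine ⟨1, (-1 - Qf n i z) / α, ?_, ?_⟩
    · rw [div_nonneg_iff]; right
      constructor <;> linarith [habs1.1]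
    · rw [inner_AA1, Qf_lin, ← hα]
      have hb : BB n 1 = -1 := by simp [BB]
      rw [hb, div_mul_cancel₀ _ haneg.ne]; ring
  · have hb : β = 1 ∨ β = -1 := by
      have h0 : (β - 1) * (β + 1) = 0 := by nlinarith
      rcases mul_eq_zero.mp h0 with h | h
      · left; linarith
      · right; linarith
    have habsW : -(|Wf n i z + 100|) ≤ Wf n i z + 100 ∧
        Wf n i z + 100 ≤ |Wf n i z + 100| := ⟨neg_abs_le _, le_abs_self _⟩
    rcases hb with hb1 | hbm
    · rcases le_or_gt 0 (Qf n i z) with hq | hq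
      · refine ⟨3, (Qf n i z - SG n * (Wf n i z + 100)) / SG n, ?_, ?_⟩
        · apply div_nonneg _ hsg.le
          have hc : SG n * (Wf n i z + 100) ≤ |Qf n i z| := by
            calc SG n * (Wf n i z + 100) ≤ SG n * |Wf n i z + 100| := by
                  nlinarith [habsW.2]
              _ ≤ |Qf n i z| := h2
          rw [abs_of_nonneg hq] at hc; linarith
        · rw [inner_AA3, Qf_lin, Wf_lin, ← hα, ← hβ, hazero, hb1]
          have hb : BB n 3 = 100 * SG n := by simp [BB]
          rw [hb]; field_simp; ring
      · refine ⟨2, (-(Qf n i z + SG n * (Wf n i z + 100))) / SG n, ?_, ?_⟩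
        · apply div_nonneg _ hsg.le
          have hc : SG n * (Wf n i z + 100) ≤ |Qf n i z| := by
            calc SG n * (Wf n i z + 100) ≤ SG n * |Wf n i z + 100| := by
                  nlinarith [habsW.2]
              _ ≤ |Qf n i z| := h2
          rw [abs_of_neg hq] at hc; linarith
        · rw [inner_AA2, Qf_lin, Wf_lin, ← hα, ← hβ, hazero, hb1]
          have hb : BB n 2 = -(100 * SG n) := by simp [BB]
          rw [hb]; field_simp; ring
    · rcases le_or_gt 0 (Qf n i z) with hq | hq
      · refine ⟨2, (Qf n i z + SG n * (Wf n i z + 100)) / SG n, ?_, ?_⟩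
        · apply div_nonneg _ hsg.le
          have hc : -(SG n * (Wf n i z + 100)) ≤ |Qf n i z| := by
            calc -(SG n * (Wf n i z + 100)) ≤ SG n * |Wf n i z + 100| := by
                  nlinarith [habsW.1]
              _ ≤ |Qf n i z| := h2
          rw [abs_of_nonneg hq] at hc; linarith
        · rw [inner_AA2, Qf_lin, Wf_lin, ← hα, ← hβ, hazero, hbm]
          have hb : BB n 2 = -(100 * SG n) := by simp [BB]
          rw [hb]; field_simp; ring
      · refine ⟨3, (SG n * (Wf n i z + 100) - Qf n i z) / SG n, ?_, ?_⟩
        · apply div_nonneg _ hsg.le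
          have hc : -(SG n * (Wf n i z + 100)) ≤ |Qf n i z| := by
            calc -(SG n * (Wf n i z + 100)) ≤ SG n * |Wf n i z + 100| := by
                  nlinarith [habsW.1]
              _ ≤ |Qf n i z| := h2
          rw [abs_of_neg hq] at hc; linarith
        · rw [inner_AA3, Qf_lin, Wf_lin, ← hα, ← hβ, hazero, hbm]
          have hb : BB n 3 = 100 * SG n := by simp [BB]
          rw [hb]; field_simp; ring
  · refine ⟨0, (1 - Qf n i z) / α, ?_, ?_⟩
    · apply div_nonneg _ hapos.le; linarith [habs1.2]
    · rw [inner_AA0, Qf_lin, ← hα]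
      have hb : BB n 0 = 1 := by simp [BB]
      rw [hb, div_mul_cancel₀ _ hapos.ne']; ring

lemma escape_thin (n i : ℕ) (hsg : 0 < SG n) (z : EuclideanSpace ℝ (Fin 2))
    (h1 : |Qf n i z| < 1) (h2 : |Qf n i z| < SG n * (Wf n i z + 100)) :
    ¬ inContractibleHull (AA n i) (BB n) z := by
  intro hmem
  obtain ⟨k, t, ht, heq⟩ := hmem (DV n i) (norm_DV n i)
  have habs := abs_le.mp h1.le
  fin_cases k
  · have h0 : ⟪AA n i 0, z + t • DV n i⟫ = BB n 0 := heq
    rw [inner_AA0, Qf_lin, Qf_DV_self] at h0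
    have hb : BB n 0 = 1 := by simp [BB]
    rw [hb] at h0
    have hv : Qf n i z = 1 := by linarith [h0]
    have := le_abs_self (Qf n i z)
    linarith
  · have h0 : ⟪AA n i 1, z + t • DV n i⟫ = BB n 1 := heq
    rw [inner_AA1, Qf_lin, Qf_DV_self] at h0
    have hb : BB n 1 = -1 := by simp [BB]
    rw [hb] at h0
    have hv : Qf n i z = -1 := by linarith [h0]
    have := neg_abs_le (Qf n i z)
    linarith
  · have h0 : ⟪AA n i 2, z + t • DV n i⟫ = BB n 2 := heq
    rw [inner_AA2, Qf_lin, Wf_lin, Qf_DV_self, Wf_DV_self] at h0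
    have hb : BB n 2 = -(100 * SG n) := by simp [BB]
    rw [hb] at h0
    have hl : -(Qf n i z) < SG n * (Wf n i z + 100) := by
      calc -(Qf n i z) ≤ |Qf n i z| := neg_le_abs _
        _ < _ := h2
    nlinarith [mul_nonneg hsg.le ht]
  · have h0 : ⟪AA n i 3, z + t • DV n i⟫ = BB n 3 := heq
    rw [inner_AA3, Qf_lin, Wf_lin, Qf_DV_self, Wf_DV_self] at h0
    have hb : BB n 3 = 100 * SG n := by simp [BB]
    rw [hb] at h0
    have hl : Qf n i z < SG n * (Wf n i z + 100) := by
      calc Qf n i z ≤ |Qf n i z| := le_abs_self _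
        _ < _ := h2
    nlinarith [mul_nonneg hsg.le ht]

lemma escape_out (n i : ℕ) (hsg : 0 < SG n) (z : EuclideanSpace ℝ (Fin 2))
    (h1 : 1 < |Qf n i z|) (h2 : SG n * |Wf n i z + 100| < |Qf n i z|) :
    ¬ inContractibleHull (AA n i) (BB n) z := by
  set y := z + (100 : ℝ) • DV n i with hy
  have hQy : Qf n i y = Qf n i z := by
    rw [hy, Qf_lin, Qf_DV_self]; ring
  have hWy : Wf n i y = Wf n i z + 100 := by
    rw [hy, Wf_lin, Wf_DV_self]; ring
  have hy0 : y ≠ 0 := by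
    intro h
    have h0 : Qf n i y = 0 := by rw [h]; simp [Qf]
    rw [hQy] at h0
    rw [h0] at h1; simp at h1; linarith
  intro hmem
  obtain ⟨k, t, ht, heq⟩ := hmem ((‖y‖ : ℝ)⁻¹ • y) (norm_inv_smul hy0)
  have hny : (0:ℝ) < ‖y‖ := norm_pos_iff.mpr hy0
  have hQu : Qf n i ((‖y‖ : ℝ)⁻¹ • y) = ‖y‖⁻¹ * Qf n i z := by
    rw [Qf_smul, hQy]
  have hWu : Wf n i ((‖y‖ : ℝ)⁻¹ • y) = ‖y‖⁻¹ * (Wf n i z + 100) := by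
    rw [Wf_smul, hWy]
  have hyt : (0:ℝ) < ‖y‖ + t := by linarith
  fin_cases k
  · have h0 : ⟪AA n i 0, z + t • ((‖y‖ : ℝ)⁻¹ • y)⟫ = BB n 0 := heq
    rw [inner_AA0, Qf_lin, hQu] at h0
    have hb : BB n 0 = 1 := by simp [BB]
    rw [hb] at h0
    have hfac : Qf n i z * (‖y‖ + t) = ‖y‖ := by
      field_simp at h0; linear_combination h0
    have habs : |Qf n i z| * (‖y‖ + t) = ‖y‖ := by
      rw [← abs_of_pos hyt, ← abs_mul, hfac, abs_of_pos hny]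
    nlinarith [abs_nonneg (Qf n i z)]
  · have h0 : ⟪AA n i 1, z + t • ((‖y‖ : ℝ)⁻¹ • y)⟫ = BB n 1 := heq
    rw [inner_AA1, Qf_lin, hQu] at h0
    have hb : BB n 1 = -1 := by simp [BB]
    rw [hb] at h0
    have hfac : Qf n i z * (‖y‖ + t) = -‖y‖ := by
      field_simp at h0; linear_combination h0
    have habs : |Qf n i z| * (‖y‖ + t) = ‖y‖ := by
      rw [← abs_of_pos hyt, ← abs_mul, hfac, abs_neg, abs_of_pos hny]
    nlinarith [abs_nonneg (Qf n i z)]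
  · have h0 : ⟪AA n i 2, z + t • ((‖y‖ : ℝ)⁻¹ • y)⟫ = BB n 2 := heq
    rw [inner_AA2, Qf_lin, Wf_lin, hQu, hWu] at h0
    have hb : BB n 2 = -(100 * SG n) := by simp [BB]
    rw [hb] at h0
    have hne : Qf n i z + SG n * (Wf n i z + 100) ≠ 0 := by
      intro hz
      have he : |Qf n i z| = SG n * |Wf n i z + 100| := by
        have hq : Qf n i z = -(SG n * (Wf n i z + 100)) := by linarith
        rw [hq, abs_neg, abs_mul, abs_of_pos hsg]
      linarith
    have hfac : (Qf n i z + SG n * (Wf n i z + 100)) * (‖y‖ + t) = 0 := by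
      field_simp at h0; linear_combination h0
    rcases mul_eq_zero.mp hfac with h | h
    · exact hne h
    · linarith
  · have h0 : ⟪AA n i 3, z + t • ((‖y‖ : ℝ)⁻¹ • y)⟫ = BB n 3 := heq
    rw [inner_AA3, Qf_lin, Wf_lin, hQu, hWu] at h0
    have hb : BB n 3 = 100 * SG n := by simp [BB]
    rw [hb] at h0
    have hne : Qf n i z - SG n * (Wf n i z + 100) ≠ 0 := by
      intro hz
      have he : |Qf n i z| = SG n * |Wf n i z + 100| := by
        have hq : Qf n i z = SG n * (Wf n i z + 100) := by linarith
        rw [hq, abs_mul, abs_of_pos hsg]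
      linarith
    have hfac : (Qf n i z - SG n * (Wf n i z + 100)) * (‖y‖ + t) = 0 := by
      field_simp at h0; linear_combination h0
    rcases mul_eq_zero.mp hfac with h | h
    · exact hne h
    · linarith

end NoHellyAux
namespace NoHellyAux

open Real

section TrigFacts

variable {n : ℕ} (hn : 3 ≤ n)

lemma nR_pos (hn : 3 ≤ n) : (0:ℝ) < n := by
  have : (3:ℝ) ≤ n := by exact_mod_cast hn
  linarith

lemma ang_pos (hn : 3 ≤ n) : 0 < π / (2 * n) := by
  have := nR_pos hn
  positivity

lemma ang_le (hn : 3 ≤ n) : π / (2 * n) ≤ π / 6 := by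
  have h3 : (3:ℝ) ≤ n := by exact_mod_cast hn
  apply div_le_div_of_nonneg_left Real.pi_pos.le (by norm_num) (by linarith)

lemma ang_lt_pi (hn : 3 ≤ n) : π / (2 * n) < π := by
  have := ang_le hn
  linarith [Real.pi_pos]

lemma sin2n_pos (hn : 3 ≤ n) : 0 < Real.sin (π / (2 * n)) :=
  Real.sin_pos_of_pos_of_lt_pi (ang_pos hn) (ang_lt_pi hn)

lemma sin2n_le (hn : 3 ≤ n) : Real.sin (π / (2 * n)) ≤ 2 / 3 := by
  have h1 : Real.sin (π / (2*n)) < π / (2*n) := Real.sin_lt (ang_pos hn)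
  have h2 := ang_le hn
  have h3 := Real.pi_le_four
  linarith

lemma cos2n_ge (hn : 3 ≤ n) : 43 / 50 ≤ Real.cos (π / (2 * n)) := by
  have h1 : Real.cos (π/6) ≤ Real.cos (π/(2*n)) :=
    Real.cos_le_cos_of_nonneg_of_le_pi (ang_pos hn).le
      (by linarith [Real.pi_pos]) (ang_le hn)
  have h2 : Real.cos (π/6) = Real.sqrt 3 / 2 := Real.cos_pi_div_six
  have h3 : (43:ℝ)/25 ≤ Real.sqrt 3 := by
    rw [show (43:ℝ)/25 = 1.72 by norm_num]
    rw [Real.le_sqrt (by norm_num)] <;> norm_num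
  linarith

lemma cos2n_le_one : Real.cos (π / (2 * n)) ≤ 1 := Real.cos_le_one _

lemma SG_pos (hn : 3 ≤ n) : 0 < SG n := by
  have := sin2n_pos hn; unfold SG; positivity

lemma SG_le (hn : 3 ≤ n) : SG n ≤ 1 / 105 := by
  have := sin2n_le hn; unfold SG; linarith

lemma pin_eq (hn : 3 ≤ n) : π / n = 2 * (π / (2 * n)) := by
  have h0 : (n:ℝ) ≠ 0 := (nR_pos hn).ne'
  field_simp

lemma SS_one (n : ℕ) : SS n 1 = Real.sin (π / n) := by
  unfold SS; norm_num

lemma CC_one (n : ℕ) : CC n 1 = Real.cos (π / n) := by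
  unfold CC; norm_num

lemma sin_n_double (hn : 3 ≤ n) :
    Real.sin (π / n) = 2 * Real.sin (π / (2*n)) * Real.cos (π / (2*n)) := by
  rw [pin_eq hn, Real.sin_two_mul]

lemma cos_n_double (hn : 3 ≤ n) :
    Real.cos (π / n) = 2 * Real.cos (π / (2*n)) ^ 2 - 1 := by
  rw [pin_eq hn, Real.cos_two_mul]

lemma halfangle (hn : 3 ≤ n) :
    (1 + CC n 1) * Real.sin (π / (2*n)) = SS n 1 * Real.cos (π / (2*n)) := by
  rw [SS_one, CC_one, sin_n_double hn, cos_n_double hn]; ring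

lemma sin_n_pos (hn : 3 ≤ n) : 0 < Real.sin (π / n) := by
  rw [sin_n_double hn]
  have h1 := sin2n_pos hn
  have h2 := cos2n_ge hn
  nlinarith

lemma cos_n_nonneg (hn : 3 ≤ n) : 0 ≤ Real.cos (π / n) := by
  apply Real.cos_nonneg_of_mem_Icc
  constructor
  · have h0 : (0:ℝ) < π / n := by have := nR_pos hn; positivity
    linarith [Real.pi_pos]
  · have h3 : (3:ℝ) ≤ n := by exact_mod_cast hn
    rw [div_le_div_iff₀ (by linarith) (by norm_num : (0:ℝ) < 2)]
    nlinarith [Real.pi_pos]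

-- sin (π k / n) ≥ sin (π / n) for 1 ≤ k ≤ n - 1
lemma sink_half (hn : 3 ≤ n) (m : ℕ) (hm1 : 1 ≤ m) (hm2 : 2 * m ≤ n) :
    Real.sin (π / n) ≤ Real.sin (π * m / n) := by
  have hnR := nR_pos hn
  have hmem1 : π / n ∈ Set.Icc (-(π/2)) (π/2) := by
    constructor
    · have : 0 < π / n := by positivity
      linarith [Real.pi_pos]
    · rw [div_le_div_iff₀ hnR (by norm_num : (0:ℝ) < 2)]
      have h3 : (3:ℝ) ≤ n := by exact_mod_cast hn
      nlinarith [Real.pi_pos]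
  have hmR : (1:ℝ) ≤ m := by exact_mod_cast hm1
  have h2m : (2:ℝ) * m ≤ n := by exact_mod_cast hm2
  have hmem2 : π * m / n ∈ Set.Icc (-(π/2)) (π/2) := by
    constructor
    · have : 0 ≤ π * m / n := by positivity
      linarith [Real.pi_pos]
    · rw [div_le_div_iff₀ hnR (by norm_num : (0:ℝ) < 2)]
      nlinarith [Real.pi_pos]
  have hle : π / n ≤ π * m / n := by
    have h : π ≤ π * m := by nlinarith [Real.pi_pos]
    exact div_le_div_of_nonneg_right h hnR.le |>.trans le_rfl
  exact Real.strictMonoOn_sin.monotoneOn hmem1 hmem2 hle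

lemma sink (hn : 3 ≤ n) (k : ℕ) (hk1 : 1 ≤ k) (hk2 : k ≤ n - 1) :
    Real.sin (π / n) ≤ Real.sin (π * k / n) := by
  rcases le_or_gt (2 * k) n with h | h
  · exact sink_half hn k hk1 h
  · have hkn : k ≤ n := by omega
    have heq : π * k / n = π - π * (n - k : ℕ) / n := by
      have hnR := (nR_pos hn).ne'
      push_cast [Nat.cast_sub hkn]
      field_simp
      ring
    rw [heq, Real.sin_pi_sub]
    exact sink_half hn (n - k) (by omega) (by omega)

end TrigFacts

lemma flip_exists (n : ℕ) (hn : 0 < n) (v : ℕ → ℝ) (hvn : v n = -v 0)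
    (hnz : ∀ i ≤ n, v i ≠ 0) : ∃ i < n, v i * v (i + 1) < 0 := by
  by_contra hcon
  push_neg at hcon
  have key : ∀ i ≤ n, 0 < v i * v 0 := by
    intro i hi
    induction i with
    | zero => simpa using mul_self_pos.mpr (hnz 0 (by omega))
    | succ m ih =>
      have hm : m ≤ n := by omega
      have hmlt : m < n := by omega
      have h1 := ih hm
      have h2 := hcon m hmlt
      have h3 : v m * v (m+1) ≠ 0 := mul_ne_zero (hnz m hm) (hnz (m+1) hi)
      have h4 : 0 < v m * v (m+1) := lt_of_le_of_ne h2 (Ne.symm h3)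
      nlinarith [mul_self_pos.mpr (hnz m hm)]
  have := key n le_rfl
  rw [hvn] at this
  nlinarith [mul_self_nonneg (v 0)]

lemma abs_flip {c a b : ℝ} (hc : 0 ≤ c) (hab : a * b < 0) :
    |c * a - b| = c * |a| + |b| := by
  rcases lt_trichotomy a 0 with ha | ha | ha
  · have hb : 0 < b := by nlinarith
    have h1 : c * a - b < 0 := by nlinarith
    rw [abs_of_neg h1, abs_of_neg ha, abs_of_pos hb]; ring
  · rw [ha] at hab; simp at hab
  · have hb : b < 0 := by nlinarith
    have h1 : 0 < c * a - b := by nlinarith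
    rw [abs_of_pos h1, abs_of_pos ha, abs_of_neg hb]; ring

lemma Q_zero (n : ℕ) (z : EuclideanSpace ℝ (Fin 2)) : Qf n 0 z = z 1 := by
  simp [Qf, SS, CC]

lemma W_zero (n : ℕ) (z : EuclideanSpace ℝ (Fin 2)) : Wf n 0 z = z 0 := by
  simp [Qf, Wf, SS, CC]

lemma Q_n (n : ℕ) (hn : 3 ≤ n) (z : EuclideanSpace ℝ (Fin 2)) :
    Qf n n z = -(z 1) := by
  have h : π * n / n = π := by
    have := (nR_pos hn).ne'; field_simp
  simp [Qf, SS, CC, h]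

lemma W_n (n : ℕ) (hn : 3 ≤ n) (z : EuclideanSpace ℝ (Fin 2)) :
    Wf n n z = -(z 0) := by
  have h : π * n / n = π := by
    have := (nR_pos hn).ne'; field_simp
  simp [Wf, SS, CC, h]

lemma recQ (n i : ℕ) (z : EuclideanSpace ℝ (Fin 2)) :
    Qf n (i+1) z = CC n 1 * Qf n i z - SS n 1 * Wf n i z := by
  have harg : π * (i+1 : ℕ) / n = π * i / n + π * (1:ℕ) / n := by
    push_cast; ring
  simp only [Qf, Wf, SS, CC, harg, Real.sin_add, Real.cos_add]
  ring

lemma recW (n i : ℕ) (z : EuclideanSpace ℝ (Fin 2)) :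
    Wf n (i+1) z = CC n 1 * Wf n i z + SS n 1 * Qf n i z := by
  have harg : π * (i+1 : ℕ) / n = π * i / n + π * (1:ℕ) / n := by
    push_cast; ring
  simp only [Qf, Wf, SS, CC, harg, Real.sin_add, Real.cos_add]
  ring

lemma min_align (n : ℕ) (hn : 3 ≤ n) (z : EuclideanSpace ℝ (Fin 2)) :
    ∃ i : Fin n, |Qf n i z| ≤ ‖z‖ * Real.sin (π / (2*n)) := by
  by_contra hcon
  push_neg at hcon
  have hn0 : 0 < n := by omega
  set M := ‖z‖ * Real.sin (π / (2*n)) with hM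
  have hM0 : 0 ≤ M := mul_nonneg (norm_nonneg z) (sin2n_pos hn).le
  have hv : ∀ i ≤ n, M < |Qf n i z| := by
    intro i hi
    rcases lt_or_eq_of_le hi with hlt | heq
    · exact hcon ⟨i, hlt⟩
    · rw [heq]
      have h1 : |Qf n n z| = |Qf n 0 z| := by
        rw [Q_n n hn, Q_zero, abs_neg]
      rw [h1]
      exact hcon ⟨0, hn0⟩
  have hnz : ∀ i ≤ n, Qf n i z ≠ 0 := fun i hi =>
    abs_pos.mp (lt_of_le_of_lt hM0 (hv i hi))
  obtain ⟨i, hin, hflip⟩ := flip_exists n hn0 (fun i => Qf n i z)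
    (by show Qf n n z = -(Qf n 0 z); rw [Q_n n hn, Q_zero]) hnz
  have hrec := recQ n i z
  have hc1 := cos_n_nonneg hn
  have hc1' : 0 ≤ CC n 1 := by rw [CC_one]; exact hc1
  have habs := abs_flip hc1' hflip
  have heq2 : SS n 1 * Wf n i z = CC n 1 * Qf n i z - Qf n (i+1) z := by
    linarith [hrec]
  have hS1 : 0 < SS n 1 := by rw [SS_one]; exact sin_n_pos hn
  have h3 : SS n 1 * |Wf n i z| = CC n 1 * |Qf n i z| + |Qf n (i+1) z| := by
    rw [← habs, ← heq2, abs_mul, abs_of_pos hS1]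
  have h4 : (1 + CC n 1) * M < SS n 1 * |Wf n i z| := by
    have hv1 := hv i (by omega)
    have hv2 := hv (i+1) (by omega)
    nlinarith
  have h5 := halfangle hn
  have h6 : Real.cos (π / (2*n)) * ‖z‖ < |Wf n i z| := by
    have : SS n 1 * (Real.cos (π / (2*n)) * ‖z‖) < SS n 1 * |Wf n i z| := by
      calc SS n 1 * (Real.cos (π / (2*n)) * ‖z‖)
          = (1 + CC n 1) * M := by rw [hM]; linear_combination ‖z‖ * h5.symm
        _ < _ := h4
    exact lt_of_mul_lt_mul_left this hS1.le
  have hpy := pyQW n i z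
  have hss := Real.sin_sq_add_cos_sq (π / (2*n))
  have hvi := hv i (by omega)
  have hcpos : 0 ≤ Real.cos (π / (2*n)) * ‖z‖ :=
    mul_nonneg (by linarith [cos2n_ge hn]) (norm_nonneg z)
  nlinarith [sq_abs (Qf n i z), sq_abs (Wf n i z), abs_nonneg (Qf n i z),
    abs_nonneg (Wf n i z), norm_nonneg z]

lemma max_align (n : ℕ) (hn : 3 ≤ n) (z : EuclideanSpace ℝ (Fin 2)) :
    ∃ i : Fin n, ‖z‖ * Real.cos (π / (2*n)) ≤ |Qf n i z| := by
  by_contra hcon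
  push_neg at hcon
  have hn0 : 0 < n := by omega
  set C := ‖z‖ * Real.cos (π / (2*n)) with hC
  have hq : ∀ i ≤ n, |Qf n i z| < C := by
    intro i hi
    rcases lt_or_eq_of_le hi with hlt | heq
    · exact hcon ⟨i, hlt⟩
    · rw [heq]
      have h1 : |Qf n n z| = |Qf n 0 z| := by
        rw [Q_n n hn, Q_zero, abs_neg]
      rw [h1]; exact hcon ⟨0, hn0⟩
  have hCpos : 0 < C := lt_of_le_of_lt (abs_nonneg _) (hq 0 (by omega))
  have hzpos : 0 < ‖z‖ := by
    rcases (norm_nonneg z).lt_or_eq with h | h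
    · exact h
    · exfalso; rw [hC, ← h] at hCpos; simp at hCpos
  set m := ‖z‖ * Real.sin (π / (2*n)) with hm
  have hmpos : 0 < m := mul_pos hzpos (sin2n_pos hn)
  have hss := Real.sin_sq_add_cos_sq (π / (2*n))
  have hW : ∀ i ≤ n, m < |Wf n i z| := by
    intro i hi
    have hpy := pyQW n i z
    have hqi := hq i hi
    nlinarith [sq_abs (Qf n i z), sq_abs (Wf n i z), abs_nonneg (Qf n i z),
      abs_nonneg (Wf n i z), hCpos, hmpos]
  have hWnz : ∀ i ≤ n, Wf n i z ≠ 0 := fun i hi =>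
    abs_pos.mp (lt_of_le_of_lt hmpos.le (hW i hi))
  obtain ⟨i, hin, hflip⟩ := flip_exists n hn0 (fun i => Wf n i z)
    (by show Wf n n z = -(Wf n 0 z); rw [W_n n hn, W_zero]) hWnz
  have hrec := recW n i z
  have hc1' : 0 ≤ CC n 1 := by rw [CC_one]; exact cos_n_nonneg hn
  have habs := abs_flip hc1' hflip
  have heq2 : SS n 1 * Qf n i z = -(CC n 1 * Wf n i z - Wf n (i+1) z) := by
    linarith [hrec]
  have hS1 : 0 < SS n 1 := by rw [SS_one]; exact sin_n_pos hn
  have h3 : SS n 1 * |Qf n i z| = CC n 1 * |Wf n i z| + |Wf n (i+1) z| := by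
    rw [← habs, ← abs_neg (CC n 1 * Wf n i z - Wf n (i+1) z), ← heq2,
      abs_mul, abs_of_pos hS1]
  have h4 : (1 + CC n 1) * m < SS n 1 * |Qf n i z| := by
    have hv1 := hW i (by omega)
    have hv2 := hW (i+1) (by omega)
    nlinarith
  have h5 := halfangle hn
  have h6 : C < |Qf n i z| := by
    have hkey : SS n 1 * C < SS n 1 * |Qf n i z| := by
      calc SS n 1 * C = (1 + CC n 1) * m := by
            rw [hC, hm]; linear_combination ‖z‖ * h5.symm
        _ < _ := h4
    exact lt_of_mul_lt_mul_left hkey hS1.le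
  exact absurd (hq i (by omega)) (not_lt.mpr h6.le)

end NoHellyAux
namespace NoHellyAux

open Real

lemma Qf_DV (n i j : ℕ) :
    Qf n i (DV n j) = Real.sin (π * j / n - π * i / n) := by
  simp only [Qf, DV, SS, CC, vec2_apply_zero, vec2_apply_one, Real.sin_sub]
  ring

lemma Wf_DV (n i j : ℕ) :
    Wf n i (DV n j) = Real.cos (π * j / n - π * i / n) := by
  simp only [Wf, DV, SS, CC, vec2_apply_zero, vec2_apply_one, Real.cos_sub]
  ring

lemma witness_sin {n : ℕ} (hn : 3 ≤ n) (i j : ℕ) (hi : i < n) (hj : j < n)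
    (hij : i ≠ j) : Real.sin (π / n) ≤ |Real.sin (π * j / n - π * i / n)| := by
  have hnR := nR_pos hn
  have key : ∀ k : ℕ, 1 ≤ k → k ≤ n - 1 →
      Real.sin (π / n) ≤ |Real.sin (π * k / n)| := by
    intro k hk1 hk2
    have hkn : (k:ℝ) ≤ n := by
      have : k ≤ n := by omega
      exact_mod_cast this
    have hnn : 0 ≤ Real.sin (π * k / n) := by
      apply Real.sin_nonneg_of_nonneg_of_le_pi
      · positivity
      · rw [div_le_iff₀ hnR]; nlinarith [Real.pi_pos]
    rw [abs_of_nonneg hnn]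
    exact sink hn k hk1 hk2
  rcases lt_or_gt_of_ne hij with h | h
  · -- i < j, k = j - i
    have heq : π * j / n - π * i / n = π * (j - i : ℕ) / n := by
      push_cast [Nat.cast_sub h.le]; ring
    rw [heq]
    exact key (j - i) (by omega) (by omega)
  · -- j < i
    have heq : π * j / n - π * i / n = -(π * (i - j : ℕ) / n) := by
      push_cast [Nat.cast_sub h.le]; ring
    rw [heq, Real.sin_neg, abs_neg]
    exact key (i - j) (by omega) (by omega)

lemma AA_ne0 {n : ℕ} (hn : 3 ≤ n) (i : ℕ) (j : Fin 4) : AA n i j ≠ 0 := by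
  have hsg := SG_pos hn
  have hsgle := SG_le hn
  intro h
  have hzero : ∀ v : EuclideanSpace ℝ (Fin 2), v = 0 → ⟪v, v⟫ = 0 := by
    intro v hv; rw [hv]; simp
  have h0 := hzero _ h
  fin_cases j
  · have h0' : ⟪AA n i 0, AA n i 0⟫ = 0 := h0
    rw [inner_AA0] at h0'
    have : Qf n i (AA n i 0) = 1 := by
      simp only [AA, FV, Qf, Matrix.cons_val_zero, vec2_apply_zero, vec2_apply_one]
      nlinarith [pySC n i]
    rw [this] at h0'; norm_num at h0'
  · have h0' : ⟪AA n i 1, AA n i 1⟫ = 0 := h0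
    rw [inner_AA1] at h0'
    have : Qf n i (AA n i 1) = 1 := by
      simp only [AA, FV, Qf, Matrix.cons_val_one, Matrix.head_cons, Matrix.cons_val_zero,
        vec2_apply_zero, vec2_apply_one]
      nlinarith [pySC n i]
    rw [this] at h0'; norm_num at h0'
  · have h0' : ⟪AA n i 2, AA n i 2⟫ = 0 := h0
    have hv : ⟪AA n i 2, AA n i 2⟫ = 1 + SG n ^ 2 := by
      rw [inner2]
      simp only [AA, Matrix.cons_val_two, Matrix.tail_cons, Matrix.head_cons,
        vec2_apply_zero, vec2_apply_one]
      nlinarith [pySC n i, sq_nonneg (SG n)]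
    rw [hv] at h0'
    nlinarith [sq_nonneg (SG n)]
  · have h0' : ⟪AA n i 3, AA n i 3⟫ = 0 := h0
    have hv : ⟪AA n i 3, AA n i 3⟫ = 1 + SG n ^ 2 := by
      rw [inner2]
      simp only [AA, Matrix.cons_val_three, Matrix.tail_cons, Matrix.head_cons,
        vec2_apply_zero, vec2_apply_one]
      nlinarith [pySC n i, sq_nonneg (SG n)]
    rw [hv] at h0'
    nlinarith [sq_nonneg (SG n)]

end NoHellyAux

open NoHellyAux Real

/-- There is no Helly-type theorem for contractible hulls of line
arrangements in the plane: for every `n ≥ 3` there are `n` families of four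
lines each such that every `n - 1` of the contractible hulls have a common
point, but all `n` of them have empty intersection. -/
theorem no_helly_for_contractible_hulls (n : ℕ) (hn : 3 ≤ n) :
    ∃ (a : Fin n → Fin 4 → EuclideanSpace ℝ (Fin 2)) (b : Fin n → Fin 4 → ℝ),
      (∀ i j, a i j ≠ 0) ∧
      (∀ j : Fin n, ∃ x : EuclideanSpace ℝ (Fin 2),
        ∀ i : Fin n, i ≠ j → inContractibleHull (a i) (b i) x) ∧
      ¬ ∃ x : EuclideanSpace ℝ (Fin 2),
        ∀ i : Fin n, inContractibleHull (a i) (b i) x := by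
  classical
  refine ⟨fun i => AA n i, fun _ => BB n, ?_, ?_, ?_⟩
  · intro i j
    exact AA_ne0 hn i j
  · -- drop-one intersections
    intro j
    refine ⟨DV n j, ?_⟩
    intro i hij
    have hsg := SG_pos hn
    apply mem_hull n i hsg
    · rw [Qf_DV]
      exact abs_le.mpr ⟨Real.neg_one_le_sin _, Real.sin_le_one _⟩
    · rw [Qf_DV, Wf_DV]
      have hvne : (i : ℕ) ≠ (j : ℕ) := fun h => hij (Fin.ext h)
      have h1 := witness_sin hn i j i.isLt j.isLt hvne
      have h2 : |Real.cos (π * j / n - π * i / n) + 100| ≤ 101 := by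
        rw [abs_le]
        constructor
        · nlinarith [Real.neg_one_le_cos (π * j / n - π * i / n)]
        · nlinarith [Real.cos_le_one (π * j / n - π * i / n)]
      have h3 : SG n * 101 ≤ Real.sin (π / n) := by
        have hs2 := sin2n_pos hn
        have hc2 := cos2n_ge hn
        rw [sin_n_double hn]
        unfold SG
        nlinarith
      calc SG n * |Real.cos (π * j / n - π * i / n) + 100|
          ≤ SG n * 101 := mul_le_mul_of_nonneg_left h2 hsg.le
        _ ≤ Real.sin (π / n) := h3
        _ ≤ |Real.sin (π * j / n - π * i / n)| := h1
  · -- total intersection empty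
    rintro ⟨x, hx⟩
    have hsg := SG_pos hn
    have hsgle := SG_le hn
    have hc2 := cos2n_ge hn
    by_cases hc : ∃ i : Fin n, 1 < |Qf n i x|
    · by_cases hd : ∃ i : Fin n,
        1 < |Qf n i x| ∧ SG n * |Wf n i x + 100| < |Qf n i x|
      · obtain ⟨i, h1, h2⟩ := hd
        exact escape_out n i hsg x h1 h2 (hx i)
      · push_neg at hd
        obtain ⟨i0, hi0⟩ := hc
        have hb0 := hd i0 hi0
        have habsW : ∀ i : Fin n, |Wf n i x + 100| ≤ ‖x‖ + 100 := by
          intro i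
          have hpy := pyQW n i x
          have hW : |Wf n i x| ≤ ‖x‖ := by
            nlinarith [sq_abs (Wf n i x), abs_nonneg (Wf n i x),
              norm_nonneg x, sq_nonneg (Qf n i x)]
          calc |Wf n i x + 100| ≤ |Wf n i x| + 100 := by
                have := abs_add_le (Wf n i x) 100
                simpa using this
            _ ≤ ‖x‖ + 100 := by linarith
        have step1 : SG n * |Wf n i0 x + 100| ≤ SG n * (‖x‖ + 100) :=
          mul_le_mul_of_nonneg_left (habsW i0) hsg.le
        have step2 : SG n * (‖x‖ + 100) ≤ (‖x‖ + 100) / 105 := by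
          have hnn : (0:ℝ) ≤ ‖x‖ + 100 := by linarith [norm_nonneg x]
          nlinarith
        have hx5 : (5:ℝ) < ‖x‖ := by linarith
        obtain ⟨i1, hi1⟩ := max_align n hn x
        have hgt : 1 < |Qf n i1 x| := by nlinarith [norm_nonneg x]
        have hb1 := hd i1 hgt
        have step1' : SG n * |Wf n i1 x + 100| ≤ SG n * (‖x‖ + 100) :=
          mul_le_mul_of_nonneg_left (habsW i1) hsg.le
        nlinarith [norm_nonneg x]
    · push_neg at hc
      obtain ⟨i0, hi0⟩ := max_align n hn x
      have hxb : ‖x‖ ≤ 50 / 43 := by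
        have h := mul_le_mul_of_nonneg_left hc2 (norm_nonneg x)
        have := hc i0
        nlinarith
      obtain ⟨i1, hi1⟩ := min_align n hn x
      have hs2p := sin2n_pos hn
      have hs2l := sin2n_le hn
      refine escape_thin n i1 hsg x ?_ ?_ (hx i1)
      · nlinarith [norm_nonneg x]
      · have hpy := pyQW n i1 x
        have hW : |Wf n i1 x| ≤ ‖x‖ := by
          nlinarith [sq_abs (Wf n i1 x), abs_nonneg (Wf n i1 x),
            norm_nonneg x, sq_nonneg (Qf n i1 x)]
        have hWlow : -(‖x‖) ≤ Wf n i1 x := by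
          have := neg_abs_le (Wf n i1 x); linarith
        have hlin : 70 * ‖x‖ < Wf n i1 x + 100 := by linarith
        have hmul := mul_lt_mul_of_pos_right hlin
          (show (0:ℝ) < Real.sin (π / (2*n)) / 70 by positivity)
        unfold SG
        nlinarith [hmul]
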